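/- Let G be a group acting on a tree T without inversions, fix a base vertex b of T, let H be a subgroup of G, and let A be a nontrivial H-almost invariant subset of G which is enclosed by two distinct vertices u and v of T. Then for every edge on the (unique) path in T joining u and v, orienting it as s, the set A is equivalent to Z_s or to Z_s*, i.e. the symmetric difference of A with Z_s or with Z_s* is H-finite. -/

import Mathlib

section Defs

variable {G : Type*} [Group G]

/-- `W` is `H`-finite: contained in finitely many left cosets `Hg` of `H` in `G`. -/
def HFinite (H : Subgroup G) (W : Set G) : Prop :=
  ∃ F : Finset G, W ⊆ ⋃ g ∈ F, (· * g) '' (H : Set G)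

/-- The left translate `gX` of a subset `X` of `G`. -/
def leftTr (g : G) (X : Set G) : Set G := (g * ·) '' X

/-- `X` is an `H`-almost invariant subset of `G`: `HX = X` and for every `g` the
symmetric difference of `X` and `Xg` is `H`-finite. -/
def AlmostInv (H : Subgroup G) (X : Set G) : Prop :=
  (∀ h ∈ H, leftTr h X = X) ∧ ∀ g : G, HFinite H (symmDiff X ((· * g) '' X))

/-- `X` is a nontrivial `H`-almost invariant subset of `G`. -/
def NontrivialAI (H : Subgroup G) (X : Set G) : Prop :=
  AlmostInv H X ∧ ¬ HFinite H X ∧ ¬ HFinite H Xᶜ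

/-- `Y` crosses the `H`-almost invariant set `X`: none of the four corner sets is `H`-finite. -/
def Crosses (H : Subgroup G) (X Y : Set G) : Prop :=
  ¬ HFinite H (X ∩ Y) ∧ ¬ HFinite H (X ∩ Yᶜ) ∧ ¬ HFinite H (Xᶜ ∩ Y) ∧ ¬ HFinite H (Xᶜ ∩ Yᶜ)

/-- The coboundary `∂Y` of `Y` with respect to a finite generating set `S`. -/
def bdry (S : Finset G) (Y : Set G) : Set G :=
  {g : G | ∃ s ∈ (S : Set G) ∪ (S : Set G)⁻¹, (g ∈ Y) ≠ (g * s ∈ Y)}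

/-- `Y` crosses the `H`-almost invariant set `X` strongly: neither `∂Y ∩ X` nor
`∂Y ∩ X*` is `H`-finite. -/
def CrossesStrongly (S : Finset G) (H : Subgroup G) (X Y : Set G) : Prop :=
  ¬ HFinite H (bdry S Y ∩ X) ∧ ¬ HFinite H (bdry S Y ∩ Xᶜ)

/-- Two subsets of `G` are nested if one of the four corner sets is empty. -/
def Nested (U V : Set G) : Prop :=
  U ∩ V = ∅ ∨ U ∩ Vᶜ = ∅ ∨ Uᶜ ∩ V = ∅ ∨ Uᶜ ∩ Vᶜ = ∅

/-- The conjugate subgroup `gHg⁻¹`. -/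
def conjSub (g : G) (H : Subgroup G) : Subgroup G :=
  Subgroup.map (MulAut.conj g).toMonoidHom H

/-- A subgroup is two-ended if it contains an infinite cyclic subgroup of finite index. -/
def TwoEnded (H : Subgroup G) : Prop :=
  ∃ z : G, z ∈ H ∧ ¬ IsOfFinOrder z ∧ (Subgroup.zpowers z).relIndex H ≠ 0

/-- `G` is one-ended: `G` is infinite and every almost invariant subset of `G` (over the
trivial group) is finite or cofinite. -/
def OneEnded (G : Type*) [Group G] : Prop :=
  Infinite G ∧ ∀ X : Set G,
    (∀ g : G, (symmDiff X ((· * g) '' X)).Finite) → X.Finite ∨ Xᶜ.Finite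

/-- `G` is finitely presented. -/
def FinitelyPresentedGroup (G : Type*) [Group G] : Prop :=
  ∃ (n : ℕ) (R : Finset (FreeGroup (Fin n))),
    Nonempty (G ≃* FreeGroup (Fin n) ⧸ Subgroup.normalClosure (R : Set (FreeGroup (Fin n))))

/-- `Q(H)`: the collection of subsets of `G` which are almost invariant over some subgroup
commensurable with `H`. -/
def QH (H : Subgroup G) : Set (Set G) :=
  {X : Set G | ∃ K : Subgroup G, Subgroup.Commensurable K H ∧ AlmostInv K X}

/-- The Boolean algebra of subsets of `G` generated by a family `S` of subsets: the smallest
family containing `S` closed under complementation, finite intersections and finite unions. -/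
inductive BoolGen (S : Set (Set G)) : Set G → Prop
  | basic {U : Set G} : U ∈ S → BoolGen S U
  | compl {U : Set G} : BoolGen S U → BoolGen S Uᶜ
  | inter {U V : Set G} : BoolGen S U → BoolGen S V → BoolGen S (U ∩ V)
  | union {U V : Set G} : BoolGen S U → BoolGen S V → BoolGen S (U ∪ V)

/-- A subgroup is virtually free abelian of rank `m` if it has a finite index subgroup
isomorphic to `ℤ^m`. -/
def VirtuallyFreeAbelian (H : Subgroup G) (m : ℕ) : Prop :=
  ∃ K : Subgroup G, K ≤ H ∧ K.relIndex H ≠ 0 ∧ Nonempty (K ≃* Multiplicative (Fin m → ℤ))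

/-- `X` is `n`-canonical with respect to abelian groups: no translate of `X` crosses a
nontrivial almost invariant set over a virtually free abelian subgroup of rank at most `n`. -/
def NCanonicalAb (n : ℕ) (X : Set G) : Prop :=
  ∀ (L : Subgroup G) (m : ℕ), m ≤ n → VirtuallyFreeAbelian L m →
    ∀ Z : Set G, AlmostInv L Z → ¬ HFinite L Z → ¬ HFinite L Zᶜ →
      ∀ g : G, ¬ Crosses L Z (leftTr g X)

variable {ι : Type*}

/-- The set `E` of all translates of the sets `X i` and of their complements. -/
def Translates (X : ι → Set G) : Set (Set G) :=
  {U : Set G | ∃ (g : G) (i : ι), U = leftTr g (X i) ∨ U = (leftTr g (X i))ᶜ}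

/-- `W` is small for the element `U` of `E`: `W` is finite over the group `gHᵢg⁻¹`
associated to `U`. -/
def SmallOver (H : ι → Subgroup G) (X : ι → Set G) (U W : Set G) : Prop :=
  ∃ (g : G) (i : ι), (U = leftTr g (X i) ∨ U = (leftTr g (X i))ᶜ) ∧
    HFinite (conjSub g (H i)) W

/-- The four corner sets `U^{(*)} ∩ V^{(*)}`, indexed by pairs of booleans. -/
def corner (U V : Set G) (p : Bool × Bool) : Set G :=
  (cond p.1 U Uᶜ) ∩ (cond p.2 V Vᶜ)

/-- Condition (*): the family is in good position: whenever two of the four corner sets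
of a pair of elements of `E` are small, one of the corner sets is empty. -/
def GoodPosition (H : ι → Subgroup G) (X : ι → Set G) : Prop :=
  ∀ U ∈ Translates X, ∀ V ∈ Translates X,
    ∀ p q : Bool × Bool, p ≠ q →
      SmallOver H X U (corner U V p) → SmallOver H X U (corner U V q) →
        ∃ r : Bool × Bool, corner U V r = ∅

/-- The relation `U ≤ V` on `E`: `U ∩ V*` is empty or is the only small corner set. -/
def eLE (H : ι → Subgroup G) (X : ι → Set G) (U V : Set G) : Prop :=
  U ∩ Vᶜ = ∅ ∨
    (SmallOver H X U (U ∩ Vᶜ) ∧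
      ∀ p : Bool × Bool, p ≠ (true, false) → ¬ SmallOver H X U (corner U V p))

/-- The relation `U < V` on `E`. -/
def eLT (H : ι → Subgroup G) (X : ι → Set G) (U V : Set G) : Prop :=
  eLE H X U V ∧ U ≠ V

/-- `V` crosses the element `U` of `E`: no corner set is small. -/
def CrossesE (H : ι → Subgroup G) (X : ι → Set G) (U V : Set G) : Prop :=
  ∀ p : Bool × Bool, ¬ SmallOver H X U (corner U V p)

/-- `V` crosses the element `U` of `E` strongly. -/
def StronglyCrossesE (S : Finset G) (H : ι → Subgroup G) (X : ι → Set G) (U V : Set G) : Prop :=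
  ∃ (g : G) (i : ι), (U = leftTr g (X i) ∨ U = (leftTr g (X i))ᶜ) ∧
    ¬ HFinite (conjSub g (H i)) (bdry S V ∩ U) ∧ ¬ HFinite (conjSub g (H i)) (bdry S V ∩ Uᶜ)

/-- The relation on `E` generating the cross-connected components of `Ē`: two elements are
related if they coincide, are complementary, or cross. -/
def ccRelSet (H : ι → Subgroup G) (X : ι → Set G) (U V : Set G) : Prop :=
  U ∈ Translates X ∧ V ∈ Translates X ∧ (U = V ∨ U = Vᶜ ∨ CrossesE H X U V)

/-- `U` and `V` determine the same cross-connected component of `Ē`. -/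
def SameCCC (H : ι → Subgroup G) (X : ι → Set G) (U V : Set G) : Prop :=
  Relation.EqvGen (ccRelSet H X) U V

/-- `V̄` lies between `Ū` and `W̄` in `Ē`: some representatives satisfy `u < v < w`. -/
def BetweenBar (H : ι → Subgroup G) (X : ι → Set G) (U V W : Set G) : Prop :=
  ∃ u v w : Set G, (u = U ∨ u = Uᶜ) ∧ (v = V ∨ v = Vᶜ) ∧ (w = W ∨ w = Wᶜ) ∧
    eLT H X u v ∧ eLT H X v w

/-- The setoid on `E` whose classes are the cross-connected components of `Ē`. -/
def cccSetoid (H : ι → Subgroup G) (X : ι → Set G) :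
    Setoid {U : Set G // U ∈ Translates X} where
  r u v := SameCCC H X u.1 v.1
  iseqv := by
    refine ⟨fun u => Relation.EqvGen.refl _, ?_, ?_⟩
    · exact fun h => Relation.EqvGen.symm _ _ h
    · exact fun h₁ h₂ => Relation.EqvGen.trans _ _ _ h₁ h₂

theorem leftTr_leftTr (g g' : G) (X : Set G) : leftTr g (leftTr g' X) = leftTr (g * g') X := by
  simp only [leftTr, Set.image_image, mul_assoc]

theorem leftTr_compl (g : G) (X : Set G) : leftTr g Xᶜ = (leftTr g X)ᶜ :=
  Set.image_compl_eq (Group.mulLeft_bijective g)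

/-- Left translation as a map from `E` to `E`. -/
def translateE (X : ι → Set G) (g : G) (u : {U : Set G // U ∈ Translates X}) :
    {U : Set G // U ∈ Translates X} :=
  ⟨leftTr g u.1, by
    obtain ⟨g', i, h | h⟩ := u.2
    · exact ⟨g * g', i, Or.inl (by rw [h, leftTr_leftTr])⟩
    · exact ⟨g * g', i, Or.inr (by rw [h, leftTr_compl, leftTr_leftTr])⟩⟩

/-- Betweenness for cross-connected components: `B` lies between the distinct components
`A` and `C` if there are elements enclosed by them with `u < v < w`. -/
def BetweenCCC (H : ι → Subgroup G) (X : ι → Set G)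
    (A B C : Quotient (cccSetoid H X)) : Prop :=
  A ≠ B ∧ B ≠ C ∧ A ≠ C ∧
    ∃ u v w : {U : Set G // U ∈ Translates X},
      Quotient.mk (cccSetoid H X) u = A ∧ Quotient.mk (cccSetoid H X) v = B ∧
        Quotient.mk (cccSetoid H X) w = C ∧
        eLT H X u.1 v.1 ∧ eLT H X v.1 w.1

/-- The half-tree `Y_s` determined by the oriented edge `s = (u,v)`: the vertices
reachable from the terminal vertex `v` after deleting the edge `{u,v}`. -/
def halfTree {V : Type*} (T : SimpleGraph V) (u v : V) : Set V :=
  {w : V | (T.deleteEdges {s(u, v)}).Reachable v w}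

/-- With respect to a base vertex `b`, the subset `Z_s` of `G` determined by the
oriented edge `s = (u,v)`. -/
def Zset {V : Type*} [MulAction G V] (T : SimpleGraph V) (b u v : V) : Set G :=
  {g : G | g • b ∈ halfTree T u v}

/-- The vertex `v` encloses the `H`-almost invariant set `A`: for every edge `s`
oriented towards `v`, either `A ∩ Z_s*` or `A* ∩ Z_s*` is `H`-finite. -/
def Encloses {V : Type*} [MulAction G V] (T : SimpleGraph V) (b : V) (H : Subgroup G)
    (v : V) (A : Set G) : Prop :=
  ∀ u : V, T.Adj u v → HFinite H (A ∩ (Zset T b u v)ᶜ) ∨ HFinite H (Aᶜ ∩ (Zset T b u v)ᶜ)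

end Defs

/-!
The edges on the path from `u` to `v` are nested: the half-tree of each of them lies beyond the
first edge of the path, and its complement lies beyond the last one. Enclosure by `u` therefore
makes `A ∩ Z_s` or `A* ∩ Z_s` `H`-finite, and enclosure by `v` does the same for `Z_s*`. As
neither `A` nor `A*` is `H`-finite, the two small corners are diagonally opposite, which says
exactly that `A` is equivalent to `Z_s` or to `Z_s*`.
-/

section HFinite

variable {G : Type*} [Group G] {H : Subgroup G} {W W' : Set G}

theorem HFinite.mono (h : HFinite H W') (hW : W ⊆ W') : HFinite H W :=
  let ⟨F, hF⟩ := h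
  ⟨F, hW.trans hF⟩

theorem HFinite.union (h : HFinite H W) (h' : HFinite H W') : HFinite H (W ∪ W') := by
  classical
  obtain ⟨F, hF⟩ := h
  obtain ⟨F', hF'⟩ := h'
  exact ⟨F ∪ F', by rw [Finset.set_biUnion_union]; exact Set.union_subset_union hF hF'⟩

theorem hFinite_symmDiff_or_symmDiff_compl {A Z : Set G} (hA : ¬ HFinite H A)
    (hAc : ¬ HFinite H Aᶜ) (hZ : HFinite H (A ∩ Z) ∨ HFinite H (Aᶜ ∩ Z))
    (hZc : HFinite H (A ∩ Zᶜ) ∨ HFinite H (Aᶜ ∩ Zᶜ)) :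
    HFinite H (symmDiff A Z) ∨ HFinite H (symmDiff A Zᶜ) := by
  have hdiff : symmDiff A Z = A ∩ Zᶜ ∪ Aᶜ ∩ Z := by
    rw [Set.symmDiff_def, Set.sdiff_eq, Set.sdiff_eq, Set.inter_comm Z]
  have hdiff' : symmDiff A Zᶜ = A ∩ Z ∪ Aᶜ ∩ Zᶜ := by
    rw [Set.symmDiff_def, Set.sdiff_eq, Set.sdiff_eq, compl_compl, Set.inter_comm Zᶜ]
  rcases hZ with hAZ | hAcZ <;> rcases hZc with hAZc | hAcZc
  · exact absurd (Set.inter_union_compl A Z ▸ hAZ.union hAZc) hA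
  · exact Or.inr (hdiff' ▸ hAZ.union hAcZc)
  · exact Or.inl (hdiff ▸ hAZc.union hAcZ)
  · exact absurd (Set.inter_union_compl Aᶜ Z ▸ hAcZ.union hAcZc) hAc

end HFinite

section HalfTree

open SimpleGraph

variable {V : Type*} {T : SimpleGraph V} {c u v w x y z : V}

theorem SimpleGraph.Walk.not_nil_of_mem_darts {p : T.Walk u v} {d : T.Dart} (hd : d ∈ p.darts) :
    ¬ p.Nil :=
  fun h => by simp [Walk.darts_eq_nil.mpr h] at hd

theorem mem_halfTree_iff : z ∈ halfTree T x y ↔ ∃ p : T.Walk y z, s(x, y) ∉ p.edges :=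
  reachable_deleteEdges_iff_exists_walk

theorem halfTree_swap :
    halfTree T y x = {w : V | (T.deleteEdges {s(x, y)}).Reachable x w} := by
  rw [halfTree, Sym2.eq_swap]

theorem mem_halfTree_or_mem_halfTree_swap (h : T.Reachable y z) :
    z ∈ halfTree T x y ∨ z ∈ halfTree T y x := by
  rw [halfTree_swap (x := x) (y := y)]
  set T' := T.deleteEdges {s(x, y)}
  by_contra hz
  obtain ⟨p⟩ := h
  -- the two sides together are closed under adjacency in `T`, so `p` cannot leave them
  obtain ⟨d, -, hd, hd'⟩ := p.exists_boundary_dart {w | T'.Reachable y w ∨ T'.Reachable x w}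
    (Or.inl (Reachable.refl y)) hz
  apply hd'
  by_cases he : s(d.fst, d.snd) = s(x, y)
  · rcases Sym2.eq_iff.mp he with ⟨-, h⟩ | ⟨-, h⟩
    · exact Or.inl (h ▸ Reachable.refl _)
    · exact Or.inr (h ▸ Reachable.refl _)
  · have hadj : T'.Adj d.fst d.snd := deleteEdges_adj.mpr ⟨d.adj, he⟩
    exact hd.imp (·.trans hadj.reachable) (·.trans hadj.reachable)

theorem halfTree_compl (hT : T.IsTree) (h : T.Adj x y) :
    (halfTree T x y)ᶜ = halfTree T y x := by
  refine Set.ext fun z => ⟨fun hxy => ?_, fun hyx hxy => ?_⟩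
  · exact (mem_halfTree_or_mem_halfTree_swap (hT.connected.preconnected y z)).resolve_left hxy
  · rw [halfTree_swap] at hyx
    exact isAcyclic_iff_forall_adj_isBridge.mp hT.isAcyclic h (hyx.trans hxy.symm)

theorem halfTree_subset_halfTree (hb : T.IsBridge s(c, w)) (hcw : T.Adj c w) (hwu : w ≠ u) :
    halfTree T c w ⊆ halfTree T u c := by
  classical
  intro z hz
  obtain ⟨q, hq⟩ := mem_halfTree_iff.mp hz
  -- `q` cannot pass through `c`, since its initial segment would join `w` to `c` avoiding `cw`
  have huc : s(u, c) ∉ q.edges := fun huc => by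
    have hc := q.snd_mem_support_of_mem_edges huc
    refine hb (reachable_deleteEdges_iff_exists_walk.mpr ⟨(q.takeUntil c hc).reverse, ?_⟩)
    rw [Walk.edges_reverse, List.mem_reverse]
    exact fun h => hq (q.edges_takeUntil_subset_edges hc h)
  refine mem_halfTree_iff.mpr ⟨Walk.cons hcw q, ?_⟩
  simp [huc, hwu.symm, hcw.ne]

theorem halfTree_subset_halfTree_snd (hT : T.IsAcyclic) {p : T.Walk u v} (hp : p.IsPath)
    {d : T.Dart} (hd : d ∈ p.darts) : halfTree T d.fst d.snd ⊆ halfTree T u p.snd := by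
  induction p with
  | nil => exact absurd hd (by simp)
  | @cons u c v huc q ih =>
    rw [Walk.cons_isPath_iff] at hp
    rw [Walk.snd_cons]
    rcases List.mem_cons.mp hd with rfl | hd
    · rfl
    · have hq := Walk.not_nil_of_mem_darts hd
      have hne : q.snd ≠ u := fun h =>
        hp.2 (h ▸ List.mem_of_mem_tail (Walk.snd_mem_tail_support hq))
      exact (ih hp.1 hd).trans (halfTree_subset_halfTree
        (isAcyclic_iff_forall_adj_isBridge.mp hT (q.adj_snd hq)) (q.adj_snd hq) hne)

end HalfTree

section Zset

variable {G V : Type*} [Group G] [MulAction G V] {T : SimpleGraph V} {b c v x y x' y' : V}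
  {H : Subgroup G} {A : Set G}

theorem Zset_compl (hT : T.IsTree) (h : T.Adj x y) :
    (Zset T b x y : Set G)ᶜ = Zset T b y x := by
  ext g
  simp only [Zset, Set.mem_compl_iff, Set.mem_ofPred_eq, ← halfTree_compl hT h]

theorem Zset_mono (h : halfTree T x y ⊆ halfTree T x' y') :
    (Zset T b x y : Set G) ⊆ Zset T b x' y' :=
  fun _ hg => h hg

theorem Encloses.hFinite_inter_or (hv : Encloses T b H v A) (hT : T.IsTree) (hvc : T.Adj v c)
    {Z : Set G} (hZ : Z ⊆ Zset T b v c) : HFinite H (A ∩ Z) ∨ HFinite H (Aᶜ ∩ Z) := by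
  rw [← Zset_compl hT hvc.symm] at hZ
  exact (hv c hvc.symm).imp (·.mono (Set.inter_subset_inter_right _ hZ))
    (·.mono (Set.inter_subset_inter_right _ hZ))

end Zset

theorem stmt19_general {G V : Type*} [Group G] [MulAction G V] (T : SimpleGraph V)
    (htree : T.IsTree)
    (b : V) (H : Subgroup G) (A : Set G) (hA : NontrivialAI H A)
    (u v : V)
    (hu : Encloses T b H u A) (hv : Encloses T b H v A) :
    ∀ p : T.Walk u v, p.IsPath → ∀ d ∈ p.darts,
      HFinite H (symmDiff A (Zset T b d.toProd.1 d.toProd.2)) ∨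
      HFinite H (symmDiff A (Zset T b d.toProd.1 d.toProd.2)ᶜ) := by
  intro p hp d hd
  have hnil := SimpleGraph.Walk.not_nil_of_mem_darts hd
  have hd' : d.symm ∈ p.reverse.darts := by simpa using hd
  have hnil' := SimpleGraph.Walk.not_nil_of_mem_darts hd'
  have hfirst : (Zset T b d.fst d.snd : Set G) ⊆ Zset T b u p.snd :=
    Zset_mono (halfTree_subset_halfTree_snd htree.isAcyclic hp hd)
  have hlast : (Zset T b d.fst d.snd : Set G)ᶜ ⊆ Zset T b v p.reverse.snd := by
    rw [Zset_compl htree d.adj]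
    exact Zset_mono (halfTree_subset_halfTree_snd htree.isAcyclic hp.reverse hd')
  exact hFinite_symmDiff_or_symmDiff_compl hA.2.1 hA.2.2
    (hu.hFinite_inter_or htree (p.adj_snd hnil) hfirst)
    (hv.hFinite_inter_or htree (p.reverse.adj_snd hnil') hlast)

/-- If a nontrivial `H`-almost invariant set `A` is enclosed by two distinct
vertices `u` and `v` of a `G`-tree, then for every (oriented) edge on the path joining `u`
and `v`, `A` is equivalent to `Z_s` or to `Z_s*`. -/
theorem stmt19 {G V : Type*} [Group G] [MulAction G V] (T : SimpleGraph V)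
    (htree : T.IsTree)
    (hadj : ∀ (g : G) (x y : V), T.Adj x y → T.Adj (g • x) (g • y))
    (hinv : ∀ (g : G) (x y : V), T.Adj x y → ¬(g • x = y ∧ g • y = x))
    (b : V) (H : Subgroup G) (A : Set G) (hA : NontrivialAI H A)
    (u v : V) (huv : u ≠ v)
    (hu : Encloses T b H u A) (hv : Encloses T b H v A) :
    ∀ p : T.Walk u v, p.IsPath → ∀ d ∈ p.darts,
      HFinite H (symmDiff A (Zset T b d.toProd.1 d.toProd.2)) ∨
      HFinite H (symmDiff A (Zset T b d.toProd.1 d.toProd.2)ᶜ) :=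
  stmt19_general T htree b H A hA u v hu hv
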